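/- arXiv:1807.09735 — 4 statements merged into one kernel-verified Lean document; each statement's English description precedes it below -/
import Mathlib

section
/- Let ℓ be a Sperner-admissible labeling of Δ_{k,n}, i.e., ℓ(x) ∈ Support(x) for all x ∈ Δ_{k,n}. Then the number of monochromatic hyperedges of H_{k,n} (hyperedges all of whose vertices receive the same label) is at most C(n+k-3, k-1), and hence the number of non-monochromatic hyperedges is at least C(n+k-3, k-2). -/
open scoped BigOperators

/-- The discretized simplex `Δ_{k,n}`: points with nonnegative coordinates that are
integer multiples of `1/n` summing to `1`. -/
def disimplex (k n : ℕ) : Set (Fin k → ℚ) :=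
  {x | (∀ i, 0 ≤ x i) ∧ (∀ i, ∃ m : ℤ, (n : ℚ) * x i = (m : ℚ)) ∧ ∑ i, x i = 1}

/-- The `i`-th standard unit vector in `ℚ^k`. -/
def stdVec (k : ℕ) (i : Fin k) : Fin k → ℚ := fun j => if j = i then 1 else 0

/-- The hyperedge of `H_{k,n}` indexed by a point `z` of `Δ_{k,n-1}`. -/
def hyperedge (k n : ℕ) (z : Fin k → ℚ) : Set (Fin k → ℚ) :=
  {y | ∃ i : Fin k, y = fun j => (((n : ℚ) - 1) / n) * z j + (1 / n) * stdVec k i j}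

/-- The set of hyperedges of the hypergraph `H_{k,n}`. -/
def hyperedges (k n : ℕ) : Set (Set (Fin k → ℚ)) :=
  (hyperedge k n) '' (disimplex k (n - 1))

/-!
Scaling by `n` identifies `Δ_{k,n}` with the vectors `f ∈ ℕ^k` of sum `n`, and the hyperedge
indexed by a lattice point `f` of sum `n - 1` with `{f + eᵢ}`. If that hyperedge is monochromatic
of colour `c`, admissibility at a vertex `f + eᵢ` with `i ≠ c` forces `f c ≥ 1`, so `f - e_c` has
sum `n - 2`. The map `f ↦ f - e_c` is injective on monochromatic hyperedges: `f - e_c = f' - e_c'`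
makes `f + e_c' = f' + e_c` a common vertex, whence `c = c'`. This bounds the monochromatic
hyperedges by `C(n+k-3, k-1)`; there are `C(n+k-2, k-1)` hyperedges in all, and Pascal's rule gives
the second bound. For `n = 1` the only hyperedge is the set of unit vectors, which admissibility
labels injectively.
-/

section LatticeEdge

variable {ι : Type*} [DecidableEq ι]

def latticeEdge (f : ι → ℕ) : Set (ι → ℕ) := Set.range fun i => f + Pi.single i 1

lemma add_single_mem_latticeEdge (f : ι → ℕ) (i : ι) : f + Pi.single i 1 ∈ latticeEdge f :=
  ⟨i, rfl⟩

lemma latticeEdge_injective : Function.Injective (latticeEdge (ι := ι)) := by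
  intro f f' h
  funext a
  obtain ⟨j, hj⟩ : f + Pi.single a 1 ∈ latticeEdge f' := h ▸ add_single_mem_latticeEdge f a
  by_cases hja : j = a
  · subst hja
    exact congrFun (add_right_cancel hj.symm) j
  · obtain ⟨j', hj'⟩ : f + Pi.single j 1 ∈ latticeEdge f' := h ▸ add_single_mem_latticeEdge f j
    have h₁ := congrFun hj a
    have h₂ := congrFun hj' a
    simp only [Pi.add_apply, Pi.single_apply, if_true] at h₁ h₂
    split_ifs at h₁ h₂ <;> omega

lemma single_le_of_forall_label_eq [Nontrivial ι] {L : (ι → ℕ) → ι} {f : ι → ℕ} {c : ι}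
    (hL : ∀ x ∈ latticeEdge f, 0 < x (L x)) (hc : ∀ x ∈ latticeEdge f, L x = c) :
    Pi.single c 1 ≤ f := by
  obtain ⟨i, hi⟩ := exists_ne c
  have h := hL _ (add_single_mem_latticeEdge f i)
  rw [hc _ (add_single_mem_latticeEdge f i)] at h
  intro j
  by_cases hj : j = c
  · subst hj
    simpa [hi.symm, Nat.one_le_iff_ne_zero, ← Nat.pos_iff_ne_zero] using h
  · simp [hj]

variable [Fintype ι]

lemma finite_setOf_sum_eq (m : ℕ) : {f : ι → ℕ | ∑ i, f i = m}.Finite :=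
  Set.finite_coe_iff.mp (Finite.of_equiv _ (Sym.equivNatSumOfFintype ι m))

lemma ncard_setOf_sum_eq (m : ℕ) :
    {f : ι → ℕ | ∑ i, f i = m}.ncard = (Fintype.card ι + m - 1).choose m := by
  rw [← Nat.card_coe_set_eq]
  exact (Nat.card_congr (Sym.equivNatSumOfFintype ι m).symm).trans
    (by rw [Nat.card_eq_fintype_card, Sym.card_sym_eq_choose])

lemma ncard_monochromatic_latticeEdge_le [Nontrivial ι] (L : (ι → ℕ) → ι) {m : ℕ}
    (hL : ∀ x : ι → ℕ, ∑ i, x i = m + 2 → 0 < x (L x)) :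
    {f : ι → ℕ | ∑ i, f i = m + 1 ∧ ∃ c, ∀ x ∈ latticeEdge f, L x = c}.ncard ≤
      {g : ι → ℕ | ∑ i, g i = m}.ncard := by
  obtain ⟨i₀⟩ : Nonempty ι := inferInstance
  have hL' : ∀ f : ι → ℕ, ∑ i, f i = m + 1 → ∀ x ∈ latticeEdge f, 0 < x (L x) := by
    rintro f hf _ ⟨i, rfl⟩
    exact hL _ (by simp [Finset.sum_add_distrib, hf])
  have color_eq : ∀ f c, (∀ x ∈ latticeEdge f, L x = c) → L (f + Pi.single i₀ 1) = c :=
    fun f c hc => hc _ (add_single_mem_latticeEdge f i₀)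
  refine Set.ncard_le_ncard_of_injOn (fun f => f - Pi.single (L (f + Pi.single i₀ 1)) 1)
    ?_ ?_ (finite_setOf_sum_eq m)
  · rintro f ⟨hf, c, hc⟩
    rw [Set.mem_ofPred_eq, color_eq f c hc]
    rw [← tsub_add_cancel_of_le (single_le_of_forall_label_eq (hL' f hf) hc)] at hf
    simpa [Finset.sum_add_distrib] using hf
  · rintro f ⟨hf, c, hc⟩ f' ⟨hf', c', hc'⟩ h
    simp only [color_eq f c hc, color_eq f' c' hc'] at h
    have hcross : f + Pi.single c' 1 = f' + Pi.single c 1 := by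
      rw [← tsub_add_cancel_of_le (single_le_of_forall_label_eq (hL' f hf) hc),
        ← tsub_add_cancel_of_le (single_le_of_forall_label_eq (hL' f' hf') hc'), h,
        add_right_comm]
    have hcc : c = c' := by
      rw [← hc _ (add_single_mem_latticeEdge f c'), hcross,
        hc' _ (add_single_mem_latticeEdge f' c)]
    subst hcc
    exact add_right_cancel hcross

end LatticeEdge

section Simplex

variable {k n : ℕ}

def latticePoint (m : ℕ) (f : Fin k → ℕ) : Fin k → ℚ := fun i => f i / m

lemma latticePoint_injective {m : ℕ} (hm : m ≠ 0) :
    Function.Injective (latticePoint (k := k) m) := by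
  intro f f' h
  funext i
  have := congrFun h i
  simp only [latticePoint] at this
  exact_mod_cast (div_left_inj' (Nat.cast_ne_zero.mpr hm)).mp this

lemma disimplex_eq_image_latticePoint {m : ℕ} (hm : m ≠ 0) :
    disimplex k m = latticePoint m '' {f | ∑ i, f i = m} := by
  have hm' : (m : ℚ) ≠ 0 := Nat.cast_ne_zero.mpr hm
  ext x
  constructor
  · rintro ⟨hx₀, hx, hsum⟩
    choose a ha using hx
    have ha' : ∀ i, ((a i).toNat : ℚ) = m * x i := fun i => by
      have : 0 ≤ a i := by exact_mod_cast ha i ▸ mul_nonneg (Nat.cast_nonneg m) (hx₀ i)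
      rw [← Int.cast_natCast, Int.toNat_of_nonneg this, ha i]
    refine ⟨fun i => (a i).toNat, ?_, funext fun i => ?_⟩
    · have : ((∑ i, (a i).toNat : ℕ) : ℚ) = m := by
        rw [Nat.cast_sum, Finset.sum_congr rfl fun i _ => ha' i, ← Finset.mul_sum, hsum, mul_one]
      exact_mod_cast this
    · simp only [latticePoint, ha']
      field_simp
  · rintro ⟨f, hf, rfl⟩
    refine ⟨fun i => by unfold latticePoint; positivity,
      fun i => ⟨f i, by rw [latticePoint, Int.cast_natCast]; field_simp⟩, ?_⟩
    simp only [latticePoint, ← Finset.sum_div]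
    rw [div_eq_one_iff_eq hm']
    exact_mod_cast hf

lemma hyperedge_latticePoint (hn : 2 ≤ n) (f : Fin k → ℕ) :
    hyperedge k n (latticePoint (n - 1) f) = latticePoint n '' latticeEdge f := by
  have hn₀ : (n : ℚ) ≠ 0 := by positivity
  have hn₁ : ((n - 1 : ℕ) : ℚ) = n - 1 := by rw [Nat.cast_sub (by omega), Nat.cast_one]
  have hn₁' : (n : ℚ) - 1 ≠ 0 := by rw [← hn₁]; exact_mod_cast (by omega : n - 1 ≠ 0)
  have vertex_eq : ∀ i,
      (fun j => ((n : ℚ) - 1) / n * latticePoint (n - 1) f j + 1 / n * stdVec k i j) =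
        latticePoint n (f + Pi.single i 1) := fun i => by
    funext j
    simp only [latticePoint, stdVec, Pi.add_apply, Pi.single_apply, hn₁]
    split_ifs <;> field_simp <;> push_cast <;> ring
  ext y
  rw [latticeEdge, ← Set.range_comp]
  exact exists_congr fun i => by rw [vertex_eq, eq_comm]; rfl

lemma hyperedges_eq_image_latticeEdge (hn : 2 ≤ n) :
    hyperedges k n = (fun f => latticePoint n '' latticeEdge f) '' {f | ∑ i, f i = n - 1} := by
  rw [hyperedges, disimplex_eq_image_latticePoint (by omega), Set.image_image]
  exact Set.image_congr fun f _ => hyperedge_latticePoint hn f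

lemma injective_image_latticeEdge (hn : n ≠ 0) :
    Function.Injective fun f : Fin k → ℕ => latticePoint n '' latticeEdge f :=
  (Set.image_injective.mpr (latticePoint_injective hn)).comp latticeEdge_injective

lemma ncard_hyperedges (hk : 1 ≤ k) (hn : 2 ≤ n) :
    (hyperedges k n).ncard = (n + k - 2).choose (k - 1) := by
  rw [hyperedges_eq_image_latticeEdge hn,
    Set.ncard_image_of_injective _ (injective_image_latticeEdge (by omega)), ncard_setOf_sum_eq,
    Fintype.card_fin, show k + (n - 1) - 1 = n + k - 2 by omega]
  exact Nat.choose_symm_of_eq_add (by omega)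

lemma ncard_monochromatic_hyperedges_le (hk : 2 ≤ k) (hn : 2 ≤ n) (ℓ : (Fin k → ℚ) → Fin k)
    (hadm : ∀ x ∈ disimplex k n, 0 < x (ℓ x)) :
    {e ∈ hyperedges k n | ∃ c, ∀ x ∈ e, ℓ x = c}.ncard ≤ (n + k - 3).choose (k - 1) := by
  have : Nontrivial (Fin k) := Fin.nontrivial_iff_two_le.mpr hk
  obtain ⟨m, rfl⟩ : ∃ m, n = m + 2 := ⟨n - 2, by omega⟩
  have hmono : {e ∈ hyperedges k (m + 2) | ∃ c, ∀ x ∈ e, ℓ x = c} =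
      (fun f => latticePoint (m + 2) '' latticeEdge f) ''
        {f | ∑ i, f i = m + 1 ∧ ∃ c, ∀ x ∈ latticeEdge f, ℓ (latticePoint (m + 2) x) = c} := by
    rw [hyperedges_eq_image_latticeEdge hn]
    ext e
    constructor
    · rintro ⟨⟨f, hf, rfl⟩, c, hc⟩
      exact ⟨f, ⟨hf, c, Set.forall_mem_image.mp hc⟩, rfl⟩
    · rintro ⟨f, ⟨hf, c, hc⟩, rfl⟩
      exact ⟨⟨f, hf, rfl⟩, c, Set.forall_mem_image.mpr hc⟩
  have hadm' : ∀ x : Fin k → ℕ, ∑ i, x i = m + 2 → 0 < x (ℓ (latticePoint (m + 2) x)) := by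
    intro x hx
    have hx' : latticePoint (m + 2) x ∈ disimplex k (m + 2) := by
      rw [disimplex_eq_image_latticePoint (by omega)]
      exact ⟨x, hx, rfl⟩
    have hpos := hadm _ hx'
    rw [latticePoint, div_pos_iff_of_pos_right (by positivity)] at hpos
    exact_mod_cast hpos
  rw [hmono, Set.ncard_image_of_injective _ (injective_image_latticeEdge (by omega))]
  refine (ncard_monochromatic_latticeEdge_le _ hadm').trans_eq ?_
  rw [ncard_setOf_sum_eq, Fintype.card_fin, show k + m - 1 = m + 2 + k - 3 by omega]
  exact Nat.choose_symm_of_eq_add (by omega)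

lemma stdVec_mem_disimplex (m : ℕ) (i : Fin k) : stdVec k i ∈ disimplex k m := by
  refine ⟨fun j => ?_, fun j => ⟨if j = i then m else 0, ?_⟩, by simp [stdVec]⟩ <;>
    by_cases h : j = i <;> simp [stdVec, h]

lemma hyperedges_one (hk : k ≠ 0) : hyperedges k 1 = {Set.range (stdVec k)} := by
  have hedge : ∀ z, hyperedge k 1 z = Set.range (stdVec k) := fun z => by
    ext y
    simp [hyperedge, Set.mem_range, eq_comm]
  rw [hyperedges, Set.image_congr' hedge,
    Set.Nonempty.image_const ⟨_, stdVec_mem_disimplex 0 ⟨0, by omega⟩⟩]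

lemma label_stdVec {ℓ : (Fin k → ℚ) → Fin k} (hadm : ∀ x ∈ disimplex k 1, 0 < x (ℓ x))
    (i : Fin k) : ℓ (stdVec k i) = i := by
  by_contra h
  simpa [stdVec, h] using hadm _ (stdVec_mem_disimplex 1 i)

lemma not_monochromatic_range_stdVec (hk : 2 ≤ k) {ℓ : (Fin k → ℚ) → Fin k}
    (hadm : ∀ x ∈ disimplex k 1, 0 < x (ℓ x)) : ¬ ∃ c, ∀ x ∈ Set.range (stdVec k), ℓ x = c := by
  rintro ⟨c, hc⟩
  have : Nontrivial (Fin k) := Fin.nontrivial_iff_two_le.mpr hk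
  obtain ⟨i, j, hij⟩ := exists_pair_ne (Fin k)
  rw [← label_stdVec hadm i, ← label_stdVec hadm j, hc _ ⟨i, rfl⟩, hc _ ⟨j, rfl⟩] at hij
  exact hij rfl

end Simplex

/-- Mirzakhani–Vondrák: for a Sperner-admissible labeling, the number of
monochromatic hyperedges of `H_{k,n}` is at most `C(n+k-3, k-1)`, hence the
number of non-monochromatic hyperedges is at least `C(n+k-3, k-2)`. -/
theorem stmt4 (k n : ℕ) (hk : 2 ≤ k) (hn : 1 ≤ n)
    (ℓ : (Fin k → ℚ) → Fin k)
    (hadm : ∀ x ∈ disimplex k n, 0 < x (ℓ x)) :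
    {e ∈ hyperedges k n | ∃ c, ∀ x ∈ e, ℓ x = c}.ncard ≤ (n + k - 3).choose (k - 1) ∧
      (n + k - 3).choose (k - 2) ≤
        {e ∈ hyperedges k n | ¬ ∃ c, ∀ x ∈ e, ℓ x = c}.ncard := by
  obtain rfl | hn := hn.eq_or_lt
  · have hnot := not_monochromatic_range_stdVec hk hadm
    rw [hyperedges_one (by omega), Set.sep_eq_empty_iff_mem_false.mpr (by simpa using hnot),
      Set.sep_eq_self_iff_mem_true.mpr (by simpa using hnot)]
    simp [show 1 + k - 3 = k - 2 by omega]
  · have hE := ncard_hyperedges (k := k) (by omega) hn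
    have hM := ncard_monochromatic_hyperedges_le hk hn ℓ hadm
    have hN : {e ∈ hyperedges k n | ¬ ∃ c, ∀ x ∈ e, ℓ x = c} =
        hyperedges k n \ {e ∈ hyperedges k n | ∃ c, ∀ x ∈ e, ℓ x = c} := by
      ext e; simp
    have pascal := Nat.choose_succ_succ' (n + k - 3) (k - 2)
    rw [show n + k - 3 + 1 = n + k - 2 by omega, show k - 2 + 1 = k - 1 by omega] at pascal
    rw [hN, Set.ncard_sdiff' (Set.sep_subset _ _)
      (Set.finite_of_ncard_pos (hE ▸ Nat.choose_pos (by omega)))]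
    omega
end

section
/- Let ℓ : Δ_{k,n} → [k] be a labeling whose inadmissible labels all lie on the face x_k = 0 and are all equal to k. Let Z be the set of inadmissibly labeled vertices. Then the number of monochromatic hyperedges of H_{k,n} that contain a vertex of Z is at most (n/(n+k-2))·|Z|. -/
open scoped BigOperators

/-
The hyperedge with base point `z ∈ Δ_{k,n-1}` has the `k` vertices `v_i = ((n-1)/n) z + e_i/n`.
Count the pairs `(z, i)` with `i ≠ k` for which the hyperedge of `z` is a monochromatic hyperedge
through `Z`, each with weight `n (v_i)_i = (n-1) z_i + 1`. Such a hyperedge lies in the face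
`x_k = 0`, so all its vertices `v_i` with `i ≠ k` are in `Z`, and its weights add up to
`n + k - 2`. On the other hand `(z, i) ↦ (v_i, i)` is injective, so the pairs landing on a
vertex `y ∈ Z` weigh at most `n ∑ᵢ yᵢ = n`. Hence `(n + k - 2) |E| ≤ n |Z|`.
-/

def hyperedgeVertex (k n : ℕ) (z : Fin k → ℚ) (i : Fin k) : Fin k → ℚ :=
  fun j => (((n : ℚ) - 1) / n) * z j + (1 / n) * stdVec k i j

section Simplex

variable {k n : ℕ}

lemma disimplex_finite (hn : n ≠ 0) : (disimplex k n).Finite := by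
  have hn' : (0 : ℚ) < n := by positivity
  refine (Set.Finite.pi (t := fun _ : Fin k => (fun m : ℤ => (m : ℚ) / n) '' Set.Icc 0 n)
    fun _ => (Set.finite_Icc _ _).image _).subset ?_
  rintro x ⟨hx0, hxint, hxsum⟩ i -
  obtain ⟨m, hm⟩ := hxint i
  have hxi_le : x i ≤ 1 := hxsum ▸ Finset.single_le_sum (fun j _ => hx0 j) (Finset.mem_univ i)
  have hm0 : (0 : ℚ) ≤ m := hm ▸ mul_nonneg hn'.le (hx0 i)
  have hmn : (m : ℚ) ≤ n := hm ▸ mul_le_of_le_one_right hn'.le hxi_le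
  refine ⟨m, ⟨by exact_mod_cast hm0, by exact_mod_cast hmn⟩, ?_⟩
  simp only [← hm]
  field_simp

lemma hyperedgeVertex_mem_hyperedge (z : Fin k → ℚ) (i : Fin k) :
    hyperedgeVertex k n z i ∈ hyperedge k n z := ⟨i, rfl⟩

lemma hyperedgeVertex_apply_of_ne {z : Fin k → ℚ} {i j : Fin k} (h : j ≠ i) :
    hyperedgeVertex k n z i j = ((n : ℚ) - 1) / n * z j := by
  simp [hyperedgeVertex, stdVec, h]

lemma natCast_mul_hyperedgeVertex_self (hn : n ≠ 0) (z : Fin k → ℚ) (i : Fin k) :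
    n * hyperedgeVertex k n z i i = ((n : ℚ) - 1) * z i + 1 := by
  simp only [hyperedgeVertex, stdVec, if_true]
  field_simp

lemma hyperedgeVertex_left_injective (hn : 2 ≤ n) (i : Fin k) :
    Function.Injective fun z => hyperedgeVertex k n z i := by
  intro z z' h
  have hn' : ((n : ℚ) - 1) / n ≠ 0 := by
    have : (2 : ℚ) ≤ n := by exact_mod_cast hn
    exact div_ne_zero (by linarith) (by linarith)
  funext j
  simpa [hyperedgeVertex, hn'] using congrFun h j

lemma eq_zero_of_hyperedgeVertex_apply_eq_zero (hn : 2 ≤ n) {z : Fin k → ℚ} {i j : Fin k}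
    (hz : 0 ≤ z j) (h : hyperedgeVertex k n z i j = 0) : z j = 0 := by
  have hn' : (2 : ℚ) ≤ n := by exact_mod_cast hn
  have he : 0 ≤ stdVec k i j := by unfold stdVec; split_ifs <;> norm_num
  have hz' : 0 ≤ ((n : ℚ) - 1) / n * z j :=
    mul_nonneg (div_nonneg (by linarith) (by positivity)) hz
  have hv : 0 ≤ 1 / (n : ℚ) * stdVec k i j := mul_nonneg (by positivity) he
  have : ((n : ℚ) - 1) / n * z j = 0 := by simp only [hyperedgeVertex] at h; linarith
  exact (mul_eq_zero.mp this).resolve_left (div_ne_zero (by linarith) (by linarith))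

lemma hyperedgeVertex_mem_disimplex (hn : 2 ≤ n) {z : Fin k → ℚ}
    (hz : z ∈ disimplex k (n - 1)) (i : Fin k) : hyperedgeVertex k n z i ∈ disimplex k n := by
  obtain ⟨hz0, hzint, hzsum⟩ := hz
  have hn' : (2 : ℚ) ≤ n := by exact_mod_cast hn
  have hcast : ((n - 1 : ℕ) : ℚ) = n - 1 := Nat.cast_pred (by omega)
  refine ⟨fun j => ?_, fun j => ?_, ?_⟩
  · have he : 0 ≤ stdVec k i j := by unfold stdVec; split_ifs <;> norm_num
    exact add_nonneg (mul_nonneg (div_nonneg (by linarith) (by positivity)) (hz0 j))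
      (mul_nonneg (by positivity) he)
  · obtain ⟨m, hm⟩ := hzint j
    rw [hcast] at hm
    refine ⟨m + if j = i then 1 else 0, ?_⟩
    simp only [hyperedgeVertex, stdVec]
    push_cast
    rw [← hm]
    field_simp
  · simp only [hyperedgeVertex, Finset.sum_add_distrib, ← Finset.mul_sum, hzsum]
    simp only [stdVec, Finset.sum_ite_eq', Finset.mem_univ, if_true]
    field_simp
    ring

lemma sum_erase_natCast_mul_hyperedgeVertex_self (hn : n ≠ 0) {z : Fin k → ℚ}
    (hzsum : ∑ i, z i = 1) {last : Fin k} (hlast : z last = 0) :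
    ∑ i ∈ Finset.univ.erase last, n * hyperedgeVertex k n z i i = (n : ℚ) + k - 2 := by
  simp only [natCast_mul_hyperedgeVertex_self hn, Finset.sum_add_distrib, ← Finset.mul_sum,
    Finset.sum_erase_eq_sub (Finset.mem_univ last), hzsum, hlast, Finset.sum_const,
    Finset.card_univ, Fintype.card_fin, nsmul_eq_mul, mul_one]
  ring

end Simplex

def faceHyperedgeBases (k n : ℕ) (last : Fin k) (Z : Set (Fin k → ℚ)) : Set (Fin k → ℚ) :=
  {z ∈ disimplex k (n - 1) | z last = 0 ∧ ∀ i ≠ last, hyperedgeVertex k n z i ∈ Z}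

lemma faceHyperedgeBases_finite {k n : ℕ} (hn : 2 ≤ n) (last : Fin k)
    (Z : Set (Fin k → ℚ)) :
    (faceHyperedgeBases k n last Z).Finite :=
  (disimplex_finite (by omega)).subset fun _ hz => hz.1

theorem ncard_faceHyperedgeBases_le {k n : ℕ} (hn : 2 ≤ n) (last : Fin k)
    {Z : Set (Fin k → ℚ)} (hZ : Z ⊆ disimplex k n) :
    ((n : ℚ) + k - 2) * (faceHyperedgeBases k n last Z).ncard ≤ n * Z.ncard := by
  have hBfin := faceHyperedgeBases_finite hn last Z
  have hZfin : Z.Finite := (disimplex_finite (by omega)).subset hZ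
  rw [Set.ncard_eq_toFinset_card _ hBfin, Set.ncard_eq_toFinset_card _ hZfin]
  set P := hBfin.toFinset ×ˢ Finset.univ.erase last
  let w : (Fin k → ℚ) × Fin k → ℚ := fun q => n * q.1 q.2
  let f : (Fin k → ℚ) × Fin k → (Fin k → ℚ) × Fin k :=
    fun p => (hyperedgeVertex k n p.1 p.2, p.2)
  have hf : Set.InjOn f P := by
    rintro ⟨z, i⟩ - ⟨z', i'⟩ - h
    simp only [f, Prod.mk.injEq] at h
    obtain ⟨h1, rfl⟩ := h
    rw [hyperedgeVertex_left_injective hn i h1]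
  have hfP : P.image f ⊆ hZfin.toFinset ×ˢ Finset.univ := by
    simp only [Finset.subset_iff, Finset.mem_image, Finset.mem_product, P, f,
      Set.Finite.mem_toFinset, Finset.mem_erase]
    rintro _ ⟨⟨z, i⟩, ⟨hz, hi, -⟩, rfl⟩
    exact ⟨hz.2.2 i hi, Finset.mem_univ i⟩
  calc ((n : ℚ) + k - 2) * hBfin.toFinset.card
      = ∑ p ∈ P, w (f p) := by
        rw [Finset.sum_product, Finset.card_eq_sum_ones, Nat.cast_sum, Finset.mul_sum]
        refine Finset.sum_congr rfl fun z hz => ?_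
        have hz := hBfin.mem_toFinset.mp hz
        rw [Nat.cast_one, mul_one]
        exact (sum_erase_natCast_mul_hyperedgeVertex_self (by omega) hz.1.2.2 hz.2.1).symm
    _ = ∑ q ∈ P.image f, w q := (Finset.sum_image hf).symm
    _ ≤ ∑ q ∈ hZfin.toFinset ×ˢ Finset.univ, w q :=
        Finset.sum_le_sum_of_subset_of_nonneg hfP fun q hq _ => mul_nonneg (Nat.cast_nonneg n)
          ((hZ (hZfin.mem_toFinset.mp (Finset.mem_product.mp hq).1)).1 _)
    _ = n * hZfin.toFinset.card := by
        rw [Finset.sum_product, Finset.card_eq_sum_ones, Nat.cast_sum, Finset.mul_sum]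
        refine Finset.sum_congr rfl fun y hy => ?_
        rw [← Finset.mul_sum, (hZ (hZfin.mem_toFinset.mp hy)).2.2, Nat.cast_one]

lemma monochromatic_hyperedges_subset {k n : ℕ} (hn : 2 ≤ n) (ℓ : (Fin k → ℚ) → Fin k)
    (last : Fin k) :
    {e ∈ hyperedges k n | (∃ c, ∀ x ∈ e, ℓ x = c) ∧
        ∃ x ∈ e, x ∈ disimplex k n ∧ x last = 0 ∧ ℓ x = last} ⊆
      hyperedge k n ''
        faceHyperedgeBases k n last {x ∈ disimplex k n | x last = 0 ∧ ℓ x = last} := by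
  rintro _ ⟨⟨z, hz, rfl⟩, ⟨c, hc⟩, _, ⟨j, rfl⟩, -, hx0, hxl⟩
  have hzlast : z last = 0 := eq_zero_of_hyperedgeVertex_apply_eq_zero hn (hz.1 last) hx0
  refine ⟨z, ⟨hz, hzlast, fun i hi => ⟨hyperedgeVertex_mem_disimplex hn hz i, ?_, ?_⟩⟩,
    rfl⟩
  · rw [hyperedgeVertex_apply_of_ne hi.symm, hzlast, mul_zero]
  · rw [hc _ (hyperedgeVertex_mem_hyperedge z i), ← hc _ (hyperedgeVertex_mem_hyperedge z j)]
    exact hxl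

/-- If all inadmissible labels are label `k` on the face `x_k = 0`, and `Z` is the
set of inadmissibly labeled vertices, then the number of monochromatic hyperedges
of `H_{k,n}` containing a vertex of `Z` is at most `(n/(n+k-2))·|Z|`. -/
theorem stmt6 (k n : ℕ) (hk : 2 ≤ k) (hn : 2 ≤ n)
    (ℓ : (Fin k → ℚ) → Fin k) :
    ({e ∈ hyperedges k n | (∃ c, ∀ x ∈ e, ℓ x = c) ∧
        ∃ x ∈ e, x ∈ disimplex k n ∧ x ⟨k - 1, by omega⟩ = 0 ∧
          ℓ x = ⟨k - 1, by omega⟩}.ncard : ℚ)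
      ≤ ((n : ℚ) / ((n : ℚ) + (k : ℚ) - 2)) *
        ({x ∈ disimplex k n | x ⟨k - 1, by omega⟩ = 0 ∧
          ℓ x = ⟨k - 1, by omega⟩}.ncard : ℚ) := by
  set last : Fin k := ⟨k - 1, by omega⟩
  set Z := {x ∈ disimplex k n | x last = 0 ∧ ℓ x = last}
  have hBfin := faceHyperedgeBases_finite hn last Z
  have hcard := (Set.ncard_le_ncard (monochromatic_hyperedges_subset hn ℓ last)
    (hBfin.image _)).trans (Set.ncard_image_le hBfin)
  have hbound := ncard_faceHyperedgeBases_le hn last (Z := Z) fun x hx => hx.1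
  have hpos : (0 : ℚ) < n + k - 2 := by
    have : (2 : ℚ) ≤ n := by exact_mod_cast hn
    have : (2 : ℚ) ≤ k := by exact_mod_cast hk
    linarith
  rw [div_mul_eq_mul_div, le_div_iff₀ hpos, mul_comm]
  exact (mul_le_mul_of_nonneg_left (by exact_mod_cast hcard) hpos.le).trans hbound
end

section
/- In the graph on Δ_{4,n} with edges {xy : ‖x−y‖₁ = 2/n}, every hyperedge e of H_{4,n} induces a complete subgraph on its 4 vertices (6 edges), and the edge sets induced by distinct hyperedges are pairwise disjoint. -/
open scoped BigOperators

/-- The unordered pairs of distinct vertices of a hyperedge. -/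
def inducedPairs (e : Set (Fin 4 → ℚ)) : Set (Set (Fin 4 → ℚ)) :=
  {p | ∃ x y, x ∈ e ∧ y ∈ e ∧ x ≠ y ∧ p = {x, y}}

/-!
A hyperedge of `H_{k,n}` is the vertex set `{c + eᵢ/n}` of a translate of the simplex `Δ/n`, with
`c = ((n-1)/n) z`. Any two of its vertices differ by `(eᵢ - eⱼ)/n`, which has `ℓ¹`-norm `2/n`, so
the hyperedge spans a `K₄` with `C(4,2) = 6` edges. Conversely such a difference determines `i`
(the coordinate where it is positive), and hence `c`: two translates sharing two vertices coincide.
So distinct hyperedges share at most one vertex, and no edge lies in two of them.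
-/

section SimplexVertex

variable {ι K : Type*} [DecidableEq ι]

/-- The vertices of the simplex `c + t • Δ`. -/
def simplexVertex [Field K] (c : ι → K) (t : K) (i : ι) : ι → K :=
  c + t • Pi.single i 1

theorem simplexVertex_injective [Field K] (c : ι → K) {t : K} (ht : t ≠ 0) :
    Function.Injective (simplexVertex c t) := by
  intro i j hij
  have hi := congrFun hij i
  by_contra hne
  simp [simplexVertex, Ne.symm hne, ht] at hi

theorem sum_abs_sub_simplexVertex [Fintype ι] [Field K] [LinearOrder K] [IsStrictOrderedRing K]
    (c : ι → K) (t : K) {i j : ι} (hij : i ≠ j) :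
    ∑ l, |simplexVertex c t i l - simplexVertex c t j l| = 2 * |t| := by
  rw [Fintype.sum_eq_add i j hij]
  · simp [simplexVertex, hij, Ne.symm hij, two_mul]
  · rintro l ⟨hli, hlj⟩
    simp [simplexVertex, hli, hlj]

/-- Two vertices determine the simplex: an edge `{x, y}` of `c + t • Δ` satisfies
`x - y = t • (eᵢ - eⱼ)`, which recovers `i` and hence `c`. -/
theorem eq_of_simplexVertex_eq [Field K] [CharZero K] {c c' : ι → K} {t : K} (ht : t ≠ 0)
    {i j k l : ι} (hij : i ≠ j) (hik : simplexVertex c t i = simplexVertex c' t k)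
    (hjl : simplexVertex c t j = simplexVertex c' t l) : c = c' := by
  have hdiff := congrFun (congrArg₂ (· - ·) hik hjl) i
  have hki : k = i := by
    by_contra hne
    by_cases hli : l = i <;>
      simp [simplexVertex, hij, hne, hli, ht, self_eq_neg] at hdiff
  subst hki
  simpa [simplexVertex] using hik

theorem range_simplexVertex_inter_subsingleton [Field K] [CharZero K] {c c' : ι → K} {t : K}
    (ht : t ≠ 0) (hcc' : c ≠ c') :
    (Set.range (simplexVertex c t) ∩ Set.range (simplexVertex c' t)).Subsingleton := by
  rintro _ ⟨⟨i, rfl⟩, ⟨k, hk⟩⟩ _ ⟨⟨j, rfl⟩, ⟨l, hl⟩⟩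
  by_contra hne
  exact hcc' (eq_of_simplexVertex_eq ht (fun h => hne (by rw [h])) hk.symm hl.symm)

end SimplexVertex

theorem hyperedge_eq_range (k n : ℕ) (z : Fin k → ℚ) :
    hyperedge k n z = Set.range (simplexVertex ((((n : ℚ) - 1) / n) • z) (1 / n)) := by
  ext y
  simp only [hyperedge, Set.mem_ofPred_eq, Set.mem_range, eq_comm (a := y)]
  refine exists_congr fun i => Eq.congr_left ?_
  ext j
  simp [simplexVertex, stdVec, Pi.single_apply]

theorem inducedPairs_eq (e : Set (Fin 4 → ℚ)) : inducedPairs e = {p ⊆ e | p.ncard = 2} := by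
  ext p
  simp only [inducedPairs, Set.mem_ofPred_eq, Set.ncard_eq_two]
  constructor
  · rintro ⟨x, y, hx, hy, hxy, rfl⟩
    exact ⟨Set.insert_subset hx (Set.singleton_subset_iff.2 hy), x, y, hxy, rfl⟩
  · rintro ⟨hpe, x, y, hxy, rfl⟩
    exact ⟨x, y, hpe (Set.mem_insert x _), hpe (Set.mem_insert_of_mem x rfl), hxy, rfl⟩

theorem ncard_inducedPairs {e : Set (Fin 4 → ℚ)} (he : e.Finite) :
    (inducedPairs e).ncard = e.ncard.choose 2 := by
  rw [inducedPairs_eq, Set.ncard_powerset_ncard he]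

theorem disjoint_inducedPairs {e₁ e₂ : Set (Fin 4 → ℚ)} (h : (e₁ ∩ e₂).Subsingleton) :
    Disjoint (inducedPairs e₁) (inducedPairs e₂) := by
  rw [Set.disjoint_left]
  rintro _ ⟨x, y, hx₁, hy₁, hxy, rfl⟩ hp₂
  rw [inducedPairs_eq] at hp₂
  exact hxy (h ⟨hx₁, hp₂.1 (Set.mem_insert x _)⟩ ⟨hy₁, hp₂.1 (Set.mem_insert_of_mem x rfl)⟩)

/-- Every hyperedge of `H_{4,n}` induces a complete subgraph on its `4` vertices
(`6` edges) in the graph on `Δ_{4,n}` with edges `{xy : ‖x−y‖₁ = 2/n}`, and the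
edge sets induced by distinct hyperedges are pairwise disjoint. -/
theorem stmt9 (n : ℕ) (hn : 1 ≤ n) :
    (∀ e ∈ hyperedges 4 n, e.ncard = 4 ∧
      (∀ x ∈ e, ∀ y ∈ e, x ≠ y → (∑ i, |x i - y i|) = 2 / n) ∧
      (inducedPairs e).ncard = 6) ∧
    ∀ e₁ ∈ hyperedges 4 n, ∀ e₂ ∈ hyperedges 4 n, e₁ ≠ e₂ →
      Disjoint (inducedPairs e₁) (inducedPairs e₂) := by
  have ht : (1 / n : ℚ) ≠ 0 := one_div_ne_zero (Nat.cast_ne_zero.2 (by omega))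
  refine ⟨?_, ?_⟩
  · rintro e ⟨z, -, rfl⟩
    rw [hyperedge_eq_range]
    have hcard : (Set.range (simplexVertex ((((n : ℚ) - 1) / n) • z) (1 / n))).ncard = 4 := by
      rw [Set.ncard_range_of_injective (simplexVertex_injective _ ht), Nat.card_eq_fintype_card,
        Fintype.card_fin]
    refine ⟨hcard, ?_, ?_⟩
    · rintro _ ⟨i, rfl⟩ _ ⟨j, rfl⟩ hxy
      rw [sum_abs_sub_simplexVertex _ _ fun h => hxy (by rw [h])]
      simp [div_eq_mul_inv]
    · rw [ncard_inducedPairs (Set.finite_range _), hcard]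
      rfl
  · rintro _ ⟨z₁, -, rfl⟩ _ ⟨z₂, -, rfl⟩ hne
    rw [hyperedge_eq_range, hyperedge_eq_range] at hne ⊢
    exact disjoint_inducedPairs
      (range_simplexVertex_inter_subsingleton ht fun h => hne (by rw [h]))
end

section
/- For every c with 0 < c < 1/9 and all λ₁, λ₂, λ₃, λ₄ ≥ 0 with λ₁ + λ₂ + λ₃ + λ₄ = 1, we have min(1.2λ₁ + λ₂ + 1.5λ₄, 1.2λ₁ + 2λ₂ + (6/(9c))λ₃, 1.2λ₁ + 2λ₂ + (9c²/2)λ₄) ≤ 1.20067. -/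
/-!
A convex combination of the three costs bounds their minimum. With weights `2 - β`, `3βc/2` and
`β - 1 - 3βc/2` the coefficients of `λ₂` and `λ₃` become exactly `β`, that of `λ₁` is `1.2`, and
that of `λ₄` is at most `β` precisely when `3 - 9c²/2 ≤ β (5/2 - 9c²/2 + 27c³/4)`, the inequality
defining the paper's constant `β`. For `β = 1.20067` this is the nonnegativity of a cubic in `c`
whose minimum on `c ≥ 0`, at `c = 4(β - 1)/(9β)`, is barely positive.
-/

lemma min_min_le_convex_comb {α : Type*} [Field α] [LinearOrder α] [IsStrictOrderedRing α]
    {x y z w₁ w₂ w₃ : α} (hw₁ : 0 ≤ w₁) (hw₂ : 0 ≤ w₂) (hw₃ : 0 ≤ w₃) (hw : w₁ + w₂ + w₃ = 1) :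
    min (min x y) z ≤ w₁ * x + w₂ * y + w₃ * z := by
  have hx : min (min x y) z ≤ x := (min_le_left _ _).trans (min_le_left _ _)
  have hy : min (min x y) z ≤ y := (min_le_left _ _).trans (min_le_right _ _)
  have hz : min (min x y) z ≤ z := min_le_right _ _
  calc min (min x y) z = w₁ * min (min x y) z + w₂ * min (min x y) z + w₃ * min (min x y) z := by
        rw [← add_mul, ← add_mul, hw, one_mul]
    _ ≤ w₁ * x + w₂ * y + w₃ * z := by gcongr

lemma min_costs_le {β c l1 l2 l3 l4 : ℝ} (hc : 0 < c) (hβ₁ : 1.2 ≤ β) (hβ₂ : β ≤ 2)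
    (hβc : 3 * β * c / 2 ≤ β - 1)
    (hβ : 3 - 9 * c ^ 2 / 2 ≤ β * (5 / 2 - 9 * c ^ 2 / 2 + 27 * c ^ 3 / 4))
    (h1 : 0 ≤ l1) (h4 : 0 ≤ l4) (hsum : l1 + l2 + l3 + l4 = 1) :
    min (min (1.2 * l1 + l2 + 1.5 * l4) (1.2 * l1 + 2 * l2 + (6 / (9 * c)) * l3))
        (1.2 * l1 + 2 * l2 + (9 * c ^ 2 / 2) * l4) ≤ β := by
  have hcomb := min_min_le_convex_comb (x := 1.2 * l1 + l2 + 1.5 * l4)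
    (y := 1.2 * l1 + 2 * l2 + (6 / (9 * c)) * l3) (z := 1.2 * l1 + 2 * l2 + (9 * c ^ 2 / 2) * l4)
    (w₂ := 3 * β * c / 2) (sub_nonneg.2 hβ₂) (by positivity) (sub_nonneg.2 hβc) (by ring)
  have hl3 : 3 * β * c / 2 * (6 / (9 * c) * l3) = β * l3 := by
    field_simp
    ring
  refine hcomb.trans ?_
  linear_combination mul_nonneg (sub_nonneg.2 hβ₁) h1 + mul_nonneg (sub_nonneg.2 hβ) h4 + hl3
    + β * hsum

lemma three_sub_le_mul_of_nonneg {c : ℝ} (hc : 0 ≤ c) :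
    3 - 9 * c ^ 2 / 2 ≤ 1.20067 * (5 / 2 - 9 * c ^ 2 / 2 + 27 * c ^ 3 / 4) := by
  nlinarith [mul_nonneg (sq_nonneg (c - 0.0742808)) hc, sq_nonneg (c - 0.0742808)]

theorem stmt15_general (c : ℝ) (hc1 : 0 < c) (hc2 : c < 1 / 9)
    (l1 l2 l3 l4 : ℝ) (h1 : 0 ≤ l1) (h4 : 0 ≤ l4)
    (hsum : l1 + l2 + l3 + l4 = 1) :
    min (min (1.2 * l1 + l2 + 1.5 * l4) (1.2 * l1 + 2 * l2 + (6 / (9 * c)) * l3))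
        (1.2 * l1 + 2 * l2 + (9 * c ^ 2 / 2) * l4) ≤ 1.20067 :=
  min_costs_le hc1 (by norm_num) (by norm_num) (by linarith) (three_sub_le_mul_of_nonneg hc1.le)
    h1 h4 hsum

/-- For `0 < c < 1/9` and nonnegative `λ₁, λ₂, λ₃, λ₄` summing to `1`, the minimum
of the three cut costs is at most `1.20067`. -/
theorem stmt15 (c : ℝ) (hc1 : 0 < c) (hc2 : c < 1 / 9)
    (l1 l2 l3 l4 : ℝ) (h1 : 0 ≤ l1) (h2 : 0 ≤ l2) (h3 : 0 ≤ l3) (h4 : 0 ≤ l4)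
    (hsum : l1 + l2 + l3 + l4 = 1) :
    min (min (1.2 * l1 + l2 + 1.5 * l4) (1.2 * l1 + 2 * l2 + (6 / (9 * c)) * l3))
        (1.2 * l1 + 2 * l2 + (9 * c ^ 2 / 2) * l4) ≤ 1.20067 :=
  stmt15_general c hc1 hc2 l1 l2 l3 l4 h1 h4 hsum
end
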